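/- arXiv:2210.00408 — 5 statements merged into one kernel-verified Lean document; each statement's English description precedes it below -/
import Mathlib

section
/- For all natural numbers n and d ≥ 1, the number of possible positions of an n-step simple random walk on Z^{d+1} satisfies |P_n^{d+1}| = |P_n^d| + 2·∑_{k=0}^{n-1} |P_k^d|. -/
open Finset

/-- The set of positions in `ℤ^d` reachable from the origin in exactly `n` steps,
each step being a standard unit vector or its negative. -/
def P (d n : ℕ) : Set (Fin d → ℤ) :=
  {x | ∃ f : Fin n → Fin d → ℤ,
    (∀ i, ∃ j : Fin d, f i = Pi.single j 1 ∨ f i = Pi.single j (-1)) ∧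
    x = ∑ i, f i}

lemma abs_single_sum {d : ℕ} (j : Fin d) (c : ℤ) :
    ∑ i, |(Pi.single j c : Fin d → ℤ) i| = |c| := by
  have h : ∀ i, |(Pi.single j c : Fin d → ℤ) i| = if i = j then |c| else 0 := by
    intro i; rw [Pi.single_apply]; split <;> simp
  simp [h]

lemma single_sum {d : ℕ} (j : Fin d) (c : ℤ) :
    ∑ i, (Pi.single j c : Fin d → ℤ) i = c := by
  simp [Pi.single_apply]

lemma add_single_abs_le {d : ℕ} (y : Fin d → ℤ) (j : Fin d) (c : ℤ) :
    ∑ i, |(y + Pi.single j c : Fin d → ℤ) i| ≤ (∑ i, |y i|) + |c| := by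
  calc ∑ i, |(y + Pi.single j c : Fin d → ℤ) i| ≤ ∑ i, (|y i| + |(Pi.single j c : Fin d → ℤ) i|) :=
        Finset.sum_le_sum (fun i _ => abs_add_le _ _)
    _ = (∑ i, |y i|) + ∑ i, |(Pi.single j c : Fin d → ℤ) i| := Finset.sum_add_distrib
    _ = (∑ i, |y i|) + |c| := by rw [abs_single_sum]

lemma add_single_sum {d : ℕ} (y : Fin d → ℤ) (j : Fin d) (c : ℤ) :
    ∑ i, (y + Pi.single j c : Fin d → ℤ) i = (∑ i, y i) + c := by
  simp only [Pi.add_apply]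
  rw [Finset.sum_add_distrib, single_sum]

lemma step_mem {d n : ℕ} {y : Fin d → ℤ} (hy : y ∈ P d n) (j : Fin d) {c : ℤ}
    (hc : c = 1 ∨ c = -1) : y + Pi.single j c ∈ P d (n + 1) := by
  obtain ⟨f, hf, rfl⟩ := hy
  refine ⟨Fin.snoc f (Pi.single j c), ?_, ?_⟩
  · intro i
    refine Fin.lastCases ?_ ?_ i
    · exact ⟨j, by rcases hc with rfl | rfl <;> simp⟩
    · intro i; simpa using hf i
  · simp [Fin.sum_univ_castSucc]

lemma P_forward {d : ℕ} : ∀ (n : ℕ) (f : Fin n → Fin d → ℤ),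
    (∀ i, ∃ j : Fin d, f i = Pi.single j 1 ∨ f i = Pi.single j (-1)) →
    (∑ i, |(∑ k, f k) i|) ≤ (n : ℤ) ∧ (2 : ℤ) ∣ ((n : ℤ) - ∑ i, (∑ k, f k) i) := by
  intro n
  induction n with
  | zero => intro f _; simp
  | succ n ih =>
    intro f hf
    obtain ⟨habs, hpar⟩ := ih (Fin.init f) (fun i => hf i.castSucc)
    obtain ⟨j, hj⟩ := hf (Fin.last n)
    have hc : ∃ c : ℤ, (c = 1 ∨ c = -1) ∧ f (Fin.last n) = Pi.single j c := by
      rcases hj with h | h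
      · exact ⟨1, Or.inl rfl, h⟩
      · exact ⟨-1, Or.inr rfl, h⟩
    obtain ⟨c, hc1, hc2⟩ := hc
    have hsplit : ∑ k, f k = (∑ k : Fin n, Fin.init f k) + Pi.single j c := by
      rw [Fin.sum_univ_castSucc, hc2]; rfl
    rw [hsplit]
    have h1 := add_single_abs_le (∑ k : Fin n, Fin.init f k) j c
    have h2 := add_single_sum (∑ k : Fin n, Fin.init f k) j c
    rw [h2]
    have hcabs : |c| = 1 := by rcases hc1 with rfl | rfl <;> simp
    constructor
    · rw [hcabs] at h1; push_cast; linarith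
    · obtain ⟨t, ht⟩ := hpar
      rcases hc1 with rfl | rfl
      · exact ⟨t, by push_cast at ht ⊢; linarith⟩
      · exact ⟨t + 1, by push_cast at ht ⊢; linarith⟩

lemma mem_P_iff {d n : ℕ} (hd : 1 ≤ d) (x : Fin d → ℤ) :
    x ∈ P d n ↔ (∑ i, |x i|) ≤ (n : ℤ) ∧ (2 : ℤ) ∣ ((n : ℤ) - ∑ i, x i) := by
  constructor
  · rintro ⟨f, hf, rfl⟩
    exact P_forward n f hf
  · intro h
    induction n generalizing x with
    | zero =>
      obtain ⟨habs, _⟩ := h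
      have hx : x = 0 := by
        funext i
        have h1 : |x i| ≤ ∑ i, |x i| :=
          Finset.single_le_sum (fun i _ => abs_nonneg (x i)) (Finset.mem_univ i)
        have h2 := abs_nonneg (x i)
        have h3 : |x i| = 0 := by push_cast at habs; omega
        simpa [abs_eq_zero] using h3
      exact ⟨Fin.elim0, fun i => i.elim0, by simp [hx]⟩
    | succ n ih =>
      obtain ⟨habs, hpar⟩ := h
      by_cases hx0 : ∃ j, x j ≠ 0
      · obtain ⟨j, hj⟩ := hx0
        set c : ℤ := if 0 < x j then 1 else -1 with hc
        have hc1 : c = 1 ∨ c = -1 := by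
          rw [hc]; split <;> simp
        set y : Fin d → ℤ := x - Pi.single j c with hy
        have hxy : x = y + Pi.single j c := by simp [hy]
        have habsj : |y j| = |x j| - 1 := by
          have hyj : y j = x j - c := by simp [hy]
          rw [hyj, hc]
          rcases lt_trichotomy (x j) 0 with h | h | h
          · rw [if_neg (by omega), abs_of_neg h, abs_of_nonpos (by omega)]; ring
          · omega
          · rw [if_pos h, abs_of_pos h, abs_of_nonneg (by omega)]
        have habsy : ∑ i, |y i| = (∑ i, |x i|) - 1 := by
          have heq : ∀ i ∈ Finset.univ.erase j, |y i| = |x i| := by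
            intro i hi
            have hi' := Finset.ne_of_mem_erase hi
            simp [hy, Pi.single_apply, hi']
          rw [← Finset.add_sum_erase _ _ (Finset.mem_univ j),
              ← Finset.add_sum_erase _ (fun i => |x i|) (Finset.mem_univ j), habsj,
              Finset.sum_congr rfl heq]
          ring
        have hsumy : ∑ i, y i = (∑ i, x i) - c := by
          rw [hy]
          simp only [Pi.sub_apply]
          rw [Finset.sum_sub_distrib, single_sum]
        have hymem : y ∈ P d n := by
          apply ih
          constructor
          · rw [habsy]; push_cast at habs ⊢; linarith
          · obtain ⟨t, ht⟩ := hpar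
            rw [hsumy]
            rcases hc1 with h1 | h1 <;> rw [h1]
            · exact ⟨t, by push_cast at ht ⊢; linarith⟩
            · exact ⟨t - 1, by push_cast at ht ⊢; linarith⟩
        rw [hxy]
        exact step_mem hymem j hc1
      · push_neg at hx0
        have hx : x = 0 := funext hx0
        have hne : (2:ℤ) ∣ (n + 1) := by
          have : ∑ i, x i = 0 := by simp [hx]
          rw [this, sub_zero] at hpar; exact_mod_cast hpar
        have hn1 : 1 ≤ n := by omega
        set j : Fin d := ⟨0, hd⟩
        have hymem : (Pi.single j 1 : Fin d → ℤ) ∈ P d n := by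
          apply ih
          constructor
          · have h1 : ∑ i, |Pi.single j (1:ℤ) i| = 1 := by rw [abs_single_sum]; simp
            rw [h1]; exact_mod_cast hn1
          · rw [single_sum]
            obtain ⟨t, ht⟩ := hne
            exact ⟨t - 1, by push_cast at ht ⊢; linarith⟩
        have hx2 : x = Pi.single j 1 + Pi.single j (-1) := by
          rw [← Pi.single_add, hx]; norm_num
        rw [hx2]
        exact step_mem hymem j (Or.inr rfl)

noncomputable def Q (d n : ℕ) : Finset (Fin d → ℤ) :=
  (Fintype.piFinset fun _ : Fin d => Finset.Icc (-(n:ℤ)) (n:ℤ)).filter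
    (fun x => (∑ i, |x i|) ≤ (n:ℤ) ∧ (2:ℤ) ∣ ((n:ℤ) - ∑ i, x i))

lemma mem_Q_iff {d n : ℕ} (x : Fin d → ℤ) :
    x ∈ Q d n ↔ (∑ i, |x i|) ≤ (n:ℤ) ∧ (2:ℤ) ∣ ((n:ℤ) - ∑ i, x i) := by
  rw [Q, Finset.mem_filter, and_iff_right_iff_imp]
  rintro ⟨habs, -⟩
  rw [Fintype.mem_piFinset]
  intro i
  have h1 : |x i| ≤ ∑ i, |x i| :=
    Finset.single_le_sum (fun i _ => abs_nonneg (x i)) (Finset.mem_univ i)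
  rw [Finset.mem_Icc]
  constructor <;> [skip; skip] <;> cases abs_le.mp (le_trans h1 habs) <;> omega

lemma P_eq_Q {d n : ℕ} (hd : 1 ≤ d) : P d n = ↑(Q d n) := by
  ext x
  rw [Finset.mem_coe, mem_Q_iff, mem_P_iff hd]

lemma card_P {d n : ℕ} (hd : 1 ≤ d) : Nat.card (P d n) = (Q d n).card := by
  rw [P_eq_Q hd, Nat.card_coe_set_eq, Set.ncard_coe_finset]

lemma tail_abs_sum {d : ℕ} (x : Fin (d+1) → ℤ) :
    ∑ i, |x i| = |x 0| + ∑ i, |Fin.tail x i| := by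
  rw [Fin.sum_univ_succ]; rfl

lemma tail_sum {d : ℕ} (x : Fin (d+1) → ℤ) :
    ∑ i, x i = x 0 + ∑ i, Fin.tail x i := by
  rw [Fin.sum_univ_succ]; rfl

lemma abs_sub_self_even (m : ℤ) : (2:ℤ) ∣ (m - |m|) := by
  rcases abs_cases m with ⟨h, _⟩ | ⟨h, _⟩
  · rw [h]; simp
  · rw [h]; exact ⟨m, by ring⟩

lemma Q_succ_eq_biUnion (d n : ℕ) :
    Q (d+1) n = (Finset.Icc (-(n:ℤ)) (n:ℤ)).biUnion
      (fun m => (Q d (n - m.natAbs)).image (Fin.cons m)) := by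
  ext x
  rw [Finset.mem_biUnion]
  constructor
  · intro hx
    obtain ⟨habs, hpar⟩ := (mem_Q_iff x).mp hx
    set m : ℤ := x 0 with hm
    have hm1 : |m| ≤ (n:ℤ) := by
      have h1 : |m| ≤ ∑ i, |x i| :=
        Finset.single_le_sum (fun i _ => abs_nonneg (x i)) (Finset.mem_univ 0)
      linarith
    have hmn : m.natAbs ≤ n := by
      rw [Int.abs_eq_natAbs] at hm1; exact_mod_cast hm1
    have hcast : ((n - m.natAbs : ℕ) : ℤ) = (n:ℤ) - |m| := by
      rw [Int.abs_eq_natAbs]; omega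
    refine ⟨m, by rw [Finset.mem_Icc]; constructor <;> cases abs_le.mp hm1 <;> omega,
      Finset.mem_image.mpr ⟨Fin.tail x, ?_, (Fin.cons_self_tail x).symm ▸ rfl⟩⟩
    rw [mem_Q_iff]
    rw [tail_abs_sum, ← hm] at habs
    rw [tail_sum, ← hm] at hpar
    constructor
    · rw [hcast]; linarith [abs_nonneg m]
    · obtain ⟨t, ht⟩ := hpar
      obtain ⟨s, hs⟩ := abs_sub_self_even m
      exact ⟨t + s, by rw [hcast]; linarith⟩
  · rintro ⟨m, hm, hx⟩
    rw [Finset.mem_image] at hx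
    obtain ⟨y, hy, rfl⟩ := hx
    rw [Finset.mem_Icc] at hm
    obtain ⟨habs, hpar⟩ := (mem_Q_iff y).mp hy
    have hmn : m.natAbs ≤ n := by
      obtain ⟨hm1, hm2⟩ := hm
      omega
    have hcast : ((n - m.natAbs : ℕ) : ℤ) = (n:ℤ) - |m| := by
      rw [Int.abs_eq_natAbs]; omega
    rw [hcast] at habs hpar
    rw [mem_Q_iff, tail_abs_sum, tail_sum]
    have h0 : (Fin.cons m y : Fin (d+1) → ℤ) 0 = m := rfl
    have ht : Fin.tail (Fin.cons m y : Fin (d+1) → ℤ) = y := rfl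
    rw [h0, ht]
    constructor
    · linarith
    · obtain ⟨t, ht'⟩ := hpar
      obtain ⟨s, hs⟩ := abs_sub_self_even m
      exact ⟨t - s, by linarith⟩

lemma card_Q_succ (d n : ℕ) :
    (Q (d+1) n).card = ∑ m ∈ Finset.Icc (-(n:ℤ)) (n:ℤ), (Q d (n - m.natAbs)).card := by
  rw [Q_succ_eq_biUnion]
  rw [Finset.card_biUnion]
  · apply Finset.sum_congr rfl
    intro m _
    apply Finset.card_image_of_injective
    intro y z h
    have := congrArg Fin.tail h
    simpa using this
  · intro a _ b _ hab
    simp only [Finset.disjoint_left, Finset.mem_image]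
    rintro x ⟨y, _, rfl⟩ ⟨z, _, hz⟩
    apply hab
    have := congrFun hz 0
    simpa using this.symm

lemma sum_Icc_natAbs (g : ℕ → ℕ) (n : ℕ) :
    ∑ m ∈ Finset.Icc (-(n:ℤ)) (n:ℤ), g m.natAbs
      = g 0 + 2 * ∑ j ∈ Finset.range n, g (j+1) := by
  induction n with
  | zero => simp
  | succ n ih =>
    have h1 : Finset.Icc (-((n+1 : ℕ):ℤ)) ((n+1 : ℕ):ℤ)
        = insert (-((n+1 : ℕ):ℤ)) (insert (((n+1 : ℕ):ℤ)) (Finset.Icc (-(n:ℤ)) (n:ℤ))) := by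
      ext m
      simp only [Finset.mem_Icc, Finset.mem_insert]
      push_cast
      omega
    rw [h1, Finset.sum_insert, Finset.sum_insert, ih]
    · have e1 : (-((n+1 : ℕ):ℤ)).natAbs = n + 1 := by push_cast; omega
      have e2 : (((n+1 : ℕ):ℤ)).natAbs = n + 1 := by push_cast; omega
      rw [e1, e2, Finset.sum_range_succ]
      ring
    · simp only [Finset.mem_Icc]; push_cast; omega
    · simp only [Finset.mem_insert, Finset.mem_Icc]; push_cast; omega

theorem stmt_0 (n d : ℕ) (hd : 1 ≤ d) :
    Nat.card (P (d + 1) n) =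
      Nat.card (P d n) + 2 * ∑ k ∈ Finset.range n, Nat.card (P d k) := by
  have h1 : Nat.card (P (d+1) n) = (Q (d+1) n).card := card_P (by omega)
  rw [h1, card_P hd, card_Q_succ, sum_Icc_natAbs (fun k => (Q d (n - k)).card)]
  simp only [Nat.sub_zero]
  congr 1
  rw [mul_left_cancel_iff_of_pos (by norm_num : 0 < 2)]
  rw [Finset.sum_congr rfl (fun j (hj : j ∈ Finset.range n) => by
    rw [show n - (j+1) = n - 1 - j from by omega])]
  rw [Finset.sum_range_reflect (fun j => (Q d j).card) n]
  exact Finset.sum_congr rfl (fun k hk => (card_P hd).symm)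
end

section
/- For every natural number n, the number of possible positions of an n-step simple random walk on Z^3 is |P_n^3| = (2n^3 + 6n^2 + 7n + 3)/3. -/
/-!
A walk of length `n` ends at `x` exactly when `‖x‖₁ ≤ n` and `‖x‖₁ ≡ n (mod 2)`: every step
changes the ℓ¹-norm by `±1`, and conversely from any `x ≠ 0` one can step towards the origin
(from `0` itself, step away and back). Slicing these points of `ℤ³` by the last coordinate `z`
leaves the planar sets `{‖(a, b)‖₁ ≤ m, ‖(a, b)‖₁ ≡ m (mod 2)}` with `m = n - |z|`, which the
rotation `(a, b) ↦ ((a + b + m) / 2, (a - b + m) / 2)` maps onto the square `[0, m]²`. Hence the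
count is `∑_{|z| ≤ n} (n - |z| + 1)² = (2n³ + 6n² + 7n + 3) / 3`.
-/

open Finset

def l1Norm {d : ℕ} (x : Fin d → ℤ) : ℕ := ∑ i, (x i).natAbs

section l1Norm

variable {d : ℕ}

@[simp]
lemma l1Norm_zero : l1Norm (0 : Fin d → ℤ) = 0 := by simp [l1Norm]

lemma natAbs_le_l1Norm (x : Fin d → ℤ) (i : Fin d) : (x i).natAbs ≤ l1Norm x :=
  single_le_sum (f := fun i => (x i).natAbs) (fun _ _ => Nat.zero_le _) (mem_univ i)

lemma l1Norm_add_single (x : Fin d → ℤ) (j : Fin d) (e : ℤ) :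
    l1Norm (x + Pi.single j e) + (x j).natAbs = l1Norm x + (x j + e).natAbs := by
  unfold l1Norm
  rw [← add_sum_erase _ _ (mem_univ j), ← add_sum_erase _ _ (mem_univ j),
    sum_congr rfl (g := fun i => (x i).natAbs) fun i hi => by simp [ne_of_mem_erase hi]]
  simp only [Pi.add_apply, Pi.single_eq_same]
  ring

lemma l1Norm_single (j : Fin d) (e : ℤ) : l1Norm (Pi.single j e : Fin d → ℤ) = e.natAbs := by
  simpa using l1Norm_add_single 0 j e

lemma l1Norm_add_single_of_natAbs_eq_one (x : Fin d → ℤ) (j : Fin d) {e : ℤ}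
    (he : e.natAbs = 1) :
    l1Norm (x + Pi.single j e) = l1Norm x + 1 ∨ l1Norm (x + Pi.single j e) + 1 = l1Norm x := by
  have := l1Norm_add_single x j e
  omega

lemma exists_l1Norm_sub_single {x : Fin d → ℤ} (hx : x ≠ 0) :
    ∃ j e, e.natAbs = 1 ∧ l1Norm (x - Pi.single j e) + 1 = l1Norm x := by
  obtain ⟨j, hj⟩ : ∃ j, x j ≠ 0 := Function.ne_iff.mp hx
  refine ⟨j, (x j).sign, Int.natAbs_sign_of_ne_zero hj, ?_⟩
  have := l1Norm_add_single (x - Pi.single j (x j).sign) j (x j).sign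
  rcases lt_or_gt_of_ne hj with h | h
  · simp only [Int.sign_eq_neg_one_of_neg h, sub_add_cancel, Pi.sub_apply, Pi.single_eq_same]
      at this ⊢
    omega
  · simp only [Int.sign_eq_one_of_pos h, sub_add_cancel, Pi.sub_apply, Pi.single_eq_same]
      at this ⊢
    omega

lemma l1Norm_snoc (x : Fin d → ℤ) (z : ℤ) :
    l1Norm (Fin.snoc x z : Fin (d + 1) → ℤ) = l1Norm x + z.natAbs := by
  simp [l1Norm, Fin.sum_univ_castSucc]

end l1Norm

section reachable

variable {d : ℕ}

lemma mem_P_zero {x : Fin d → ℤ} : x ∈ P d 0 ↔ x = 0 := by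
  simp [P]

lemma mem_P_succ {n : ℕ} {x : Fin d → ℤ} :
    x ∈ P d (n + 1) ↔ ∃ y ∈ P d n, ∃ j e, e.natAbs = 1 ∧ x = y + Pi.single j e := by
  constructor
  · rintro ⟨f, hf, rfl⟩
    obtain ⟨j, hj | hj⟩ := hf (Fin.last n)
    · exact ⟨_, ⟨_, fun i => hf _, rfl⟩, j, 1, rfl, by rw [Fin.sum_univ_castSucc, hj]⟩
    · exact ⟨_, ⟨_, fun i => hf _, rfl⟩, j, -1, rfl, by rw [Fin.sum_univ_castSucc, hj]⟩
  · rintro ⟨y, ⟨f, hf, rfl⟩, j, e, he, rfl⟩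
    refine ⟨Fin.snoc f (Pi.single j e), fun i => ?_, by simp [Fin.sum_univ_castSucc]⟩
    induction i using Fin.lastCases with
    | last => exact ⟨j, by rcases Int.natAbs_eq e with h | h <;> rw [he] at h <;> simp [h]⟩
    | cast i => simpa using hf i

lemma l1Norm_le_of_mem_P {n : ℕ} {x : Fin d → ℤ} (hx : x ∈ P d n) :
    l1Norm x ≤ n ∧ l1Norm x % 2 = n % 2 := by
  induction n generalizing x with
  | zero => simp [mem_P_zero.mp hx]
  | succ n ih =>
    obtain ⟨y, hy, j, e, he, rfl⟩ := mem_P_succ.mp hx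
    have := ih hy
    rcases l1Norm_add_single_of_natAbs_eq_one y j he with h | h <;> omega

lemma mem_P_of_l1Norm_le [NeZero d] {n : ℕ} {x : Fin d → ℤ} (hle : l1Norm x ≤ n)
    (hmod : l1Norm x % 2 = n % 2) : x ∈ P d n := by
  induction n generalizing x with
  | zero => simpa [mem_P_zero, l1Norm, funext_iff] using hle
  | succ n ih =>
    rw [mem_P_succ]
    by_cases hx : x = 0
    · subst hx
      refine ⟨Pi.single 0 1, ih ?_ ?_, 0, -1, rfl, by simp [← Pi.single_add]⟩
      all_goals
        rw [l1Norm_zero] at hmod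
        rw [l1Norm_single]
        omega
    · obtain ⟨j, e, he, hj⟩ := exists_l1Norm_sub_single hx
      exact ⟨x - Pi.single j e, ih (by omega) (by omega), j, e, he, (sub_add_cancel _ _).symm⟩

end reachable

noncomputable def parityBall (d n : ℕ) : Finset (Fin d → ℤ) :=
  {x ∈ Fintype.piFinset fun _ => Icc (-(n : ℤ)) n | l1Norm x ≤ n ∧ l1Norm x % 2 = n % 2}

lemma mem_parityBall {d n : ℕ} {x : Fin d → ℤ} :
    x ∈ parityBall d n ↔ l1Norm x ≤ n ∧ l1Norm x % 2 = n % 2 := by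
  simp only [parityBall, mem_filter, Fintype.mem_piFinset, mem_Icc, and_iff_right_iff_imp]
  intro h i
  have := natAbs_le_l1Norm x i
  omega

lemma P_eq_parityBall {d : ℕ} [NeZero d] (n : ℕ) : P d n = parityBall d n :=
  Set.ext fun _ => by
    rw [mem_coe, mem_parityBall]
    exact ⟨l1Norm_le_of_mem_P, fun h => mem_P_of_l1Norm_le h.1 h.2⟩

lemma card_parityBall_succ (d n : ℕ) :
    #(parityBall (d + 1) n) = ∑ z ∈ Icc (-(n : ℤ)) n, #(parityBall d (n - z.natAbs)) := by
  rw [← card_sigma]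
  refine card_nbij' (fun x => ⟨x (Fin.last d), Fin.init x⟩) (fun p => Fin.snoc p.2 p.1)
    ?_ ?_ (fun x _ => Fin.snoc_init_self x) (fun p _ => by simp)
  · intro x hx
    have := l1Norm_snoc (Fin.init x) (x (Fin.last d))
    rw [Fin.snoc_init_self] at this
    simp only [coe_sigma, Set.mem_sigma_iff, coe_Icc, Set.mem_Icc, mem_coe, mem_parityBall]
      at hx ⊢
    omega
  · rintro ⟨z, y⟩ hp
    simp only [coe_sigma, Set.mem_sigma_iff, coe_Icc, Set.mem_Icc, mem_coe, mem_parityBall,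
      l1Norm_snoc] at hp ⊢
    omega

lemma card_parityBall_two (m : ℕ) : #(parityBall 2 m) = (m + 1) ^ 2 := by
  have hsq : #(Icc (0 : ℤ) m ×ˢ Icc (0 : ℤ) m) = (m + 1) ^ 2 := by simp [sq]
  rw [← hsq]
  refine card_nbij' (fun x => ((x 0 + x 1 + m) / 2, (x 0 - x 1 + m) / 2))
    (fun p => ![p.1 + p.2 - m, p.1 - p.2]) ?_ ?_ ?_ ?_
  · intro x hx
    simp only [mem_coe, mem_parityBall, l1Norm, Fin.sum_univ_two] at hx
    simp only [coe_product, coe_Icc, Set.mem_prod, Set.mem_Icc]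
    omega
  · rintro ⟨u, v⟩ hp
    simp only [coe_product, coe_Icc, Set.mem_prod, Set.mem_Icc] at hp
    simp only [mem_coe, mem_parityBall, l1Norm, Fin.sum_univ_two, Matrix.cons_val_zero,
      Matrix.cons_val_one, Matrix.cons_val_fin_one]
    omega
  · intro x hx
    simp only [mem_coe, mem_parityBall, l1Norm, Fin.sum_univ_two] at hx
    ext i
    fin_cases i <;>
      simp only [Fin.zero_eta, Fin.mk_one, Matrix.cons_val_zero, Matrix.cons_val_one,
        Matrix.cons_val_fin_one] <;>
      omega
  · rintro ⟨u, v⟩ hp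
    simp only [Matrix.cons_val_zero, Matrix.cons_val_one, Matrix.cons_val_fin_one, Prod.mk.injEq]
    omega

lemma sum_Icc_natAbs_add {M : Type*} [AddCommMonoid M] (f : ℕ → M) (n : ℕ) :
    ∑ z ∈ Icc (-(n : ℤ)) n, f z.natAbs + f 0 = 2 • ∑ k ∈ range (n + 1), f k := by
  induction n with
  | zero => simp [two_nsmul]
  | succ n ih =>
    have hIcc : Icc (-((n + 1 : ℕ) : ℤ)) (n + 1 : ℕ) =
        insert (-(n + 1 : ℤ)) (insert (n + 1 : ℤ) (Icc (-(n : ℤ)) n)) := by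
      ext z; simp only [mem_Icc, mem_insert]; omega
    rw [hIcc, sum_insert (by simp only [mem_Icc, mem_insert]; omega),
      sum_insert (by simp only [mem_Icc]; omega), sum_range_succ, nsmul_add, ← ih]
    have hneg : (-(n + 1 : ℤ)).natAbs = n + 1 := by omega
    have hpos : (n + 1 : ℤ).natAbs = n + 1 := by omega
    rw [hneg, hpos, two_nsmul]
    abel

lemma sum_range_succ_sq_mul_six (n : ℕ) :
    6 * ∑ k ∈ range n, (k + 1) ^ 2 = n * (n + 1) * (2 * n + 1) := by
  induction n with
  | zero => simp
  | succ n ih => rw [sum_range_succ, mul_add, ih]; ring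

lemma three_mul_card_parityBall_three (n : ℕ) :
    3 * #(parityBall 3 n) = 2 * n ^ 3 + 6 * n ^ 2 + 7 * n + 3 := by
  have hslices : #(parityBall 3 n) + (n + 1) ^ 2 = 2 * ∑ k ∈ range (n + 1), (k + 1) ^ 2 := by
    rw [card_parityBall_succ, sum_congr rfl fun z _ => card_parityBall_two _,
      ← sum_range_reflect]
    have := sum_Icc_natAbs_add (fun k => (n - k + 1) ^ 2) n
    rw [smul_eq_mul] at this
    simpa using this
  have := sum_range_succ_sq_mul_six (n + 1)
  nlinarith

theorem stmt_3 (n : ℕ) :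
    (Nat.card (P 3 n) : ℚ) = (2 * n ^ 3 + 6 * n ^ 2 + 7 * n + 3) / 3 := by
  rw [P_eq_parityBall, Nat.card_coe_set_eq, Set.ncard_coe_finset, eq_div_iff three_ne_zero,
    mul_comm]
  exact_mod_cast three_mul_card_parityBall_three n
end

section
/- As formal power series over Q, the identity ∑_{n≥0} a_n^{(d)} x^n = (1+x)^{d-1}/(1−x)^{d+1} holds for every d ≥ 1, where a_n^{(d)} is defined by a_n^{(1)} = n+1 and a_n^{(d+1)} = 2∑_{k=0}^n a_k^{(d)} − a_n^{(d)}. -/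
open Finset

/-- The sequence `a d n` defined by `a 1 n = n + 1` and
`a (d+1) n = 2 * ∑_{k=0}^n a d k - a d n`. -/
def a : ℕ → ℕ → ℕ
  | 0, _ => 0
  | 1, n => n + 1
  | d + 2, n => 2 * ∑ k ∈ Finset.range (n + 1), a (d + 1) k - a (d + 1) n

open PowerSeries

lemma a_le (d n : ℕ) : a (d + 1) n ≤ 2 * ∑ k ∈ Finset.range (n + 1), a (d + 1) k := by
  calc a (d+1) n ≤ ∑ k ∈ Finset.range (n + 1), a (d + 1) k :=
        Finset.single_le_sum (fun i _ => Nat.zero_le _) (self_mem_range_succ n)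
    _ ≤ 2 * _ := by omega

lemma a_cast (d n : ℕ) :
    (a (d + 2) n : ℚ) = 2 * ∑ k ∈ Finset.range (n + 1), (a (d + 1) k : ℚ) - a (d + 1) n := by
  show ((2 * ∑ k ∈ Finset.range (n + 1), a (d + 1) k - a (d + 1) n : ℕ) : ℚ) = _
  rw [Nat.cast_sub (a_le d n)]
  push_cast
  ring

lemma sub_X_mul (f : PowerSeries ℚ) :
    (1 - X) * f = f - X * f := by ring

lemma key (d : ℕ) :
    (1 - X) * (PowerSeries.mk fun n => (a (d + 2) n : ℚ)) =
      (1 + X) * (PowerSeries.mk fun n => (a (d + 1) n : ℚ)) := by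
  have h2 : ∀ f : PowerSeries ℚ, (1 + X) * f = f + X * f := fun f => by ring
  rw [sub_X_mul, h2]
  ext n
  cases n with
  | zero =>
    simp [a_cast d 0]
    ring
  | succ n =>
    simp [coeff_succ_X_mul, a_cast, Finset.sum_range_succ]
    ring

lemma main (d : ℕ) (hd : 1 ≤ d) :
    ((1 - X : PowerSeries ℚ) ^ (d + 1)) * (PowerSeries.mk fun n => (a d n : ℚ)) =
      (1 + X) ^ (d - 1) := by
  induction d with
  | zero => omega
  | succ d ih =>
    cases Nat.eq_or_lt_of_le hd with
    | inl h =>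
      -- d + 1 = 1, i.e. d = 0
      have hd0 : d = 0 := by omega
      subst hd0
      norm_num
      -- (1-X)^2 * mk (n+1) = 1
      have h1 : (1 - X : PowerSeries ℚ) * (PowerSeries.mk fun n => ((a 1 n : ℕ) : ℚ)) =
          PowerSeries.mk fun _ => (1 : ℚ) := by
        rw [sub_X_mul]
        ext n
        cases n with
        | zero => simp [a]
        | succ n => simp [coeff_succ_X_mul, a]
      have h2 : (1 - X : PowerSeries ℚ) * PowerSeries.mk (fun _ => (1 : ℚ)) = 1 := by
        rw [sub_X_mul]
        ext n
        cases n with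
        | zero => simp
        | succ n => simp [coeff_succ_X_mul, coeff_one]
      calc (1 - X : PowerSeries ℚ) ^ 2 * PowerSeries.mk (fun n => ((a 1 n : ℕ) : ℚ))
          = (1 - X) * ((1 - X) * PowerSeries.mk fun n => ((a 1 n : ℕ) : ℚ)) := by ring
        _ = 1 := by rw [h1, h2]
    | inr h =>
      have hd1 : 1 ≤ d := by omega
      obtain ⟨e, rfl⟩ : ∃ e, d = e + 1 := ⟨d - 1, by omega⟩
      have ih' := ih hd1
      calc (1 - X : PowerSeries ℚ) ^ (e + 1 + 1 + 1) * PowerSeries.mk (fun n => ((a (e+2) n : ℕ) : ℚ))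
          = (1 - X) ^ (e + 2) * ((1 - X) * PowerSeries.mk fun n => ((a (e+2) n : ℕ) : ℚ)) := by ring
        _ = (1 - X) ^ (e + 2) * ((1 + X) * PowerSeries.mk fun n => ((a (e+1) n : ℕ) : ℚ)) := by
            rw [key e]
        _ = (1 + X) * ((1 - X) ^ (e + 1 + 1) * PowerSeries.mk fun n => ((a (e+1) n : ℕ) : ℚ)) := by
            ring
        _ = (1 + X) * (1 + X) ^ (e + 1 - 1) := by rw [ih']
        _ = (1 + X) ^ (e + 1 + 1 - 1) := by simp [pow_succ]; ring

open PowerSeries in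
theorem stmt_8 (d : ℕ) (hd : 1 ≤ d) :
    (PowerSeries.mk fun n => (a d n : ℚ)) =
      (1 + X) ^ (d - 1) * ((1 - X : PowerSeries ℚ) ^ (d + 1))⁻¹ := by
  have hunit : ((1 - X : PowerSeries ℚ) ^ (d + 1)) * ((1 - X : PowerSeries ℚ) ^ (d + 1))⁻¹ = 1 := by
    apply PowerSeries.mul_inv_cancel
    simp [constantCoeff_one]
  calc (PowerSeries.mk fun n => (a d n : ℚ))
      = ((1 - X : PowerSeries ℚ) ^ (d + 1) * ((1 - X : PowerSeries ℚ) ^ (d + 1))⁻¹) *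
        PowerSeries.mk fun n => (a d n : ℚ) := by rw [hunit, one_mul]
    _ = ((1 - X : PowerSeries ℚ) ^ (d + 1) * PowerSeries.mk fun n => (a d n : ℚ)) *
        ((1 - X : PowerSeries ℚ) ^ (d + 1))⁻¹ := by ring
    _ = (1 + X) ^ (d - 1) * ((1 - X : PowerSeries ℚ) ^ (d + 1))⁻¹ := by rw [main d hd]
end

section
/- For d ≥ 1, writing |P_n^d| = ∑_{j=0}^d c(d,j) n^j, the coefficient of n^{d-1} is c(d,d-1) = 2^{d-1}/(d−1)!. -/
open Polynomial Finset

lemma prod_cast_sub (m dd : ℕ) :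
    ∏ i ∈ Finset.range dd, ((m:ℚ) - i) = dd.factorial * m.choose dd := by
  rcases lt_or_ge m dd with h | h
  · rw [Nat.choose_eq_zero_of_lt h, Nat.cast_zero, mul_zero]
    exact Finset.prod_eq_zero (Finset.mem_range.mpr h) (by simp)
  · have : ∏ i ∈ Finset.range dd, ((m:ℚ) - i) = ((m.descFactorial dd : ℕ) : ℚ) := by
      rw [Nat.descFactorial_eq_prod_range, Nat.cast_prod]
      refine Finset.prod_congr rfl fun i hi => ?_
      rw [Nat.cast_sub (le_trans (Nat.le_of_lt_succ (Nat.lt_succ_of_lt (Finset.mem_range.mp hi))) h)]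
    rw [this, Nat.descFactorial_eq_factorial_mul_choose]
    push_cast; ring

lemma sum_k_choose (m : ℕ) :
    ∑ k ∈ Finset.range (m+1), (k:ℚ) * m.choose k = m * 2^m / 2 := by
  have hr := Finset.sum_range_reflect (fun k => (k:ℚ) * m.choose k) (m+1)
  have h2 : (∑ k ∈ Finset.range (m+1), (k:ℚ) * m.choose k) * 2
      = ∑ k ∈ Finset.range (m+1), (m:ℚ) * m.choose k := by
    rw [mul_two]
    nth_rewrite 1 [← hr]
    rw [← Finset.sum_add_distrib]
    refine Finset.sum_congr rfl fun k hk => ?_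
    have hk' : k ≤ m := Nat.lt_succ_iff.mp (Finset.mem_range.mp hk)
    simp only [Nat.add_sub_cancel]
    rw [Nat.choose_symm hk', Nat.cast_sub hk']
    ring
  have h3 : ∑ k ∈ Finset.range (m+1), (m:ℚ) * m.choose k = m * 2^m := by
    rw [← Finset.mul_sum, ← Nat.cast_sum, Nat.sum_range_choose]
    push_cast; ring
  field_simp at h2 ⊢
  linarith [h2, h3]

lemma sum_cast_choose (m : ℕ) :
    ∑ k ∈ Finset.range (m+1), ((m.choose k : ℚ)) = 2^m := by
  rw [← Nat.cast_sum, Nat.sum_range_choose]; push_cast; ring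

theorem stmt_15 (d : ℕ) (hd : 1 ≤ d) (p : Polynomial ℚ)
    (hp : ∀ n : ℕ, p.eval (n : ℚ) =
      ∑ k ∈ Finset.range d, ((d - 1).choose k * (d + n - k).choose d : ℚ)) :
    p.coeff (d - 1) = 2 ^ (d - 1) / ((d - 1).factorial : ℚ) := by
  obtain ⟨m, rfl⟩ : ∃ m, d = m + 1 := ⟨d - 1, (Nat.succ_pred_eq_of_pos hd).symm⟩
  simp only [Nat.add_sub_cancel] at hp ⊢
  set q : Polynomial ℚ := C (((m+1).factorial : ℚ))⁻¹ *
    ∑ k ∈ Finset.range (m+1), C ((m.choose k : ℚ)) *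
      ∏ i ∈ Finset.range (m+1), (X + C ((m:ℚ) + 1 - k - i)) with hq
  have hfac : ((m+1).factorial : ℚ) ≠ 0 := by positivity
  have hqeval : ∀ n : ℕ, q.eval (n : ℚ) =
      ∑ k ∈ Finset.range (m+1), ((m.choose k) * ((m + 1) + n - k).choose (m+1) : ℚ) := by
    intro n
    rw [hq]
    simp only [eval_mul, eval_C, eval_finset_sum, eval_prod, eval_add, eval_X]
    rw [Finset.mul_sum]
    refine Finset.sum_congr rfl fun k hk => ?_
    have hk' : k ≤ m + n + 1 := by
      have := Nat.lt_succ_iff.mp (Finset.mem_range.mp hk); omega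
    have hcast : (((m + 1) + n - k : ℕ) : ℚ) = (m:ℚ) + 1 + n - k := by
      rw [Nat.cast_sub (by omega)]; push_cast; ring
    have hprod : ∏ i ∈ Finset.range (m+1), ((n:ℚ) + ((m:ℚ) + 1 - k - i))
        = ((m+1).factorial : ℚ) * ((m + 1) + n - k).choose (m+1) := by
      rw [← prod_cast_sub ((m + 1) + n - k) (m+1)]
      refine Finset.prod_congr rfl fun i _ => ?_
      rw [hcast]; ring
    rw [hprod]
    field_simp
  have hpq : p = q := by
    have hsub : p - q = 0 := by
      apply Polynomial.eq_zero_of_infinite_isRoot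
      refine Set.infinite_of_injective_forall_mem
        (f := fun n : ℕ => (n : ℚ)) Nat.cast_injective fun n => ?_
      simp only [Set.mem_setOf_eq, Polynomial.IsRoot, Polynomial.eval_sub]
      rw [hp n, hqeval n]
      ring
    exact sub_eq_zero.mp hsub
  rw [hpq, hq]
  rw [Polynomial.coeff_C_mul, Polynomial.finset_sum_coeff]
  have hcoeff : ∀ k, (C ((m.choose k : ℚ)) *
      ∏ i ∈ Finset.range (m+1), (X + C ((m:ℚ) + 1 - k - i))).coeff m
      = (m.choose k : ℚ) * ∑ i ∈ Finset.range (m+1), ((m:ℚ) + 1 - k - i) := by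
    intro k
    rw [Polynomial.coeff_C_mul]
    congr 1
    have h : m ≤ #(Finset.range (m+1)) := by simp
    have h1 : m + 1 - m = 1 := by omega
    rw [Finset.prod_X_add_C_coeff _ _ h, Finset.card_range, h1,
      Finset.powersetCard_one, Finset.sum_map]
    simp
  simp only [hcoeff]
  have hgauss : ∑ i ∈ Finset.range (m+1), ((i:ℚ)) = m * (m+1) / 2 := by
    have := Finset.sum_range_id_mul_two (m+1)
    have h2 : ((∑ i ∈ Finset.range (m+1), i : ℕ) : ℚ) * 2 = ((m+1) * m : ℕ) := by
      exact_mod_cast this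
    push_cast at h2
    linarith
  have hinner : ∀ k, ∑ i ∈ Finset.range (m+1), ((m:ℚ) + 1 - k - i)
      = ((m:ℚ)+1) * ((m:ℚ) + 1 - k) - m * (m+1) / 2 := by
    intro k
    rw [Finset.sum_sub_distrib, hgauss, Finset.sum_const, Finset.card_range]
    ring
  simp only [hinner]
  have hsplit : ∑ k ∈ Finset.range (m+1),
      (m.choose k : ℚ) * (((m:ℚ)+1) * ((m:ℚ) + 1 - k) - m * (m+1) / 2)
      = (((m:ℚ)+1)*((m:ℚ)+1) - m * (m+1) / 2) * (∑ k ∈ Finset.range (m+1), (m.choose k : ℚ))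
        - ((m:ℚ)+1) * (∑ k ∈ Finset.range (m+1), (k:ℚ) * m.choose k) := by
    rw [Finset.mul_sum, Finset.mul_sum, ← Finset.sum_sub_distrib]
    refine Finset.sum_congr rfl fun k _ => by ring
  rw [hsplit, sum_cast_choose, sum_k_choose]
  rw [Nat.factorial_succ]
  have hfacm : ((m).factorial : ℚ) ≠ 0 := by positivity
  push_cast
  field_simp
  ring
end

section
/- For d ≥ 2, writing |P_n^d| = ∑_{j=0}^d c(d,j) n^j, the coefficient of n^{d-2} is c(d,d-2) = 2^{d-2}(d+4)/(6·(d−2)!). -/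
/-!
Writing `C(n + d - k, d) = (1 / d!) ∏_{i < d} (n + (d - k - i))`, the coefficient of `n^(d-2)` in
each summand is `e₂` of the shifts `d - k - i`, i.e. half the difference of the squared first
power sum and the second power sum. This is a quadratic polynomial in `k`, and its weighted sum
against `C(d - 1, k)` follows from the binomial moments `∑ C(e, k) C(k, s) = C(e, s) 2^(e - s)`.
-/

open Finset Polynomial

namespace Finset

variable {ι R : Type*} [DecidableEq ι] [CommRing R]

theorem two_mul_sum_powersetCard_two_prod (s : Finset ι) (f : ι → R) :
    2 * ∑ t ∈ s.powersetCard 2, ∏ i ∈ t, f i = (∑ i ∈ s, f i) ^ 2 - ∑ i ∈ s, f i ^ 2 := by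
  induction s using Finset.induction with
  | empty => rw [powersetCard_eq_empty.2 (by simp)]; simp
  | insert a s ha ih =>
    have hdisj : Disjoint (s.powersetCard 2) ((s.powersetCard 1).image (insert a)) := by
      refine disjoint_right.2 fun t ht ht2 => ?_
      obtain ⟨u, -, rfl⟩ := mem_image.1 ht
      exact ha ((mem_powersetCard.1 ht2).1 (mem_insert_self a u))
    have hinj : Set.InjOn (insert a) (s.powersetCard 1 : Set (Finset ι)) := by
      intro u hu v hv huv
      have hau : a ∉ u := fun h => ha ((mem_powersetCard.1 hu).1 h)
      have hav : a ∉ v := fun h => ha ((mem_powersetCard.1 hv).1 h)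
      rw [← erase_insert hau, ← erase_insert hav, huv]
    have hpair : ∑ x ∈ s, ∏ i ∈ insert a {x}, f i = f a * ∑ x ∈ s, f x := by
      rw [mul_sum]
      refine sum_congr rfl fun x hx => ?_
      rw [prod_pair (ne_of_mem_of_not_mem hx ha).symm]
    rw [powersetCard_succ_insert ha, sum_union hdisj, sum_image hinj, powersetCard_one, sum_map]
    simp only [Function.Embedding.coeFn_mk]
    rw [mul_add, ih, hpair, sum_insert ha, sum_insert ha]
    ring

theorem two_mul_prod_X_add_C_coeff_card_sub_two (s : Finset ι) (r : ι → R) (hs : 2 ≤ #s) :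
    2 * (∏ i ∈ s, (X + C (r i))).coeff (#s - 2) = (∑ i ∈ s, r i) ^ 2 - ∑ i ∈ s, r i ^ 2 := by
  rw [prod_X_add_C_coeff s r (Nat.sub_le _ _), Nat.sub_sub_self hs,
    two_mul_sum_powersetCard_two_prod]

end Finset

theorem prod_range_X_add_C_sub_coeff {R : Type*} [CommRing R] {d : ℕ} (hd : 2 ≤ d) (b : R) :
    24 * (∏ i ∈ range d, (X + C (b - i))).coeff (d - 2) =
      d * (d - 1) * (12 * b * (b - d + 1) + (3 * d - 1) * (d - 2)) := by
  have hsum : ∀ n : ℕ, 2 * ∑ i ∈ range n, (b - i) = 2 * n * b - n * (n - 1) := by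
    intro n
    induction n with
    | zero => simp
    | succ n ih => rw [sum_range_succ, mul_add, ih]; push_cast; ring
  have hsum_sq : ∀ n : ℕ, 6 * ∑ i ∈ range n, (b - i) ^ 2 =
      6 * n * b ^ 2 - 6 * n * (n - 1) * b + n * (n - 1) * (2 * n - 1) := by
    intro n
    induction n with
    | zero => simp
    | succ n ih => rw [sum_range_succ, mul_add, ih]; push_cast; ring
  have h := two_mul_prod_X_add_C_coeff_card_sub_two (range d) (fun i : ℕ => b - i)
    (by rwa [card_range])
  rw [card_range] at h
  have h1 := hsum d
  generalize ∑ i ∈ range d, (b - i) = S at h h1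
  linear_combination 12 * h + 3 * (2 * S + 2 * d * b - d * (d - 1)) * h1 - 2 * hsum_sq d

theorem Nat.sum_range_choose_mul_choose_mul_two_pow (n s : ℕ) :
    (∑ k ∈ range (n + 1), n.choose k * k.choose s) * 2 ^ s = n.choose s * 2 ^ n := by
  rcases lt_or_ge n s with hns | hsn
  · have hk : ∀ k ∈ range (n + 1), n.choose k * k.choose s = 0 := fun k hk => by
      rw [Nat.choose_eq_zero_of_lt (by grind : k < s), mul_zero]
    rw [Nat.choose_eq_zero_of_lt hns, sum_eq_zero hk, zero_mul, zero_mul]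
  obtain ⟨t, rfl⟩ := Nat.exists_eq_add_of_le hsn
  have hlow : ∑ k ∈ range s, (s + t).choose k * k.choose s = 0 :=
    sum_eq_zero fun k hk => by rw [Nat.choose_eq_zero_of_lt (mem_range.1 hk), mul_zero]
  rw [show s + t + 1 = s + (t + 1) by ring, sum_range_add, hlow, zero_add]
  simp_rw [Nat.choose_mul (Nat.le_add_right s _), Nat.add_sub_cancel_left]
  rw [← mul_sum, Nat.sum_range_choose, mul_assoc, ← pow_add, add_comm t]

theorem four_mul_sum_range_choose_mul_quadratic {K : Type*} [Field K] [CharZero K]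
    (n : ℕ) (α β γ : K) :
    4 * ∑ k ∈ range (n + 1), (n.choose k : K) * (α + β * k + γ * k ^ 2) =
      2 ^ n * (4 * α + 2 * n * β + n * (n + 1) * γ) := by
  have moment : ∀ s, (∑ k ∈ range (n + 1), (n.choose k : K) * k.choose s) * 2 ^ s =
      n.choose s * 2 ^ n := fun s => by
    exact_mod_cast Nat.sum_range_choose_mul_choose_mul_two_pow n s
  have h0 := moment 0
  have h1 := moment 1
  have h2 := moment 2
  simp only [Nat.choose_zero_right, Nat.choose_one_right, Nat.cast_one, Nat.cast_choose_two,
    mul_one, pow_zero] at h0 h1 h2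
  have hexpand : ∀ k : ℕ, (n.choose k : K) * (α + β * k + γ * k ^ 2) = α * n.choose k +
      (β + γ) * (n.choose k * k) + 2 * γ * (n.choose k * (k * (k - 1) / 2)) := fun k => by ring
  simp_rw [hexpand, sum_add_distrib, ← mul_sum]
  linear_combination 4 * α * h0 + 2 * (β + γ) * h1 + 2 * γ * h2

theorem Polynomial.eq_of_eval_natCast_eq {R : Type*} [CommRing R] [IsDomain R] [CharZero R]
    {p q : R[X]} (h : ∀ n : ℕ, p.eval (n : R) = q.eval (n : R)) : p = q :=
  eq_of_infinite_eval_eq p q <| (Set.infinite_range_of_injective Nat.cast_injective).mono <| by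
    rintro _ ⟨n, rfl⟩
    exact h n

theorem cast_choose_add_sub_eq_eval_prod {K : Type*} [Field K] [CharZero K] {d k : ℕ}
    (hk : k ≤ d) (n : ℕ) :
    ((d + n - k).choose d : K) =
      (∏ i ∈ range d, (X + C ((d : K) - k - i))).eval (n : K) / d.factorial := by
  rw [Nat.cast_choose_eq_descPochhammer_div, descPochhammer_eval_eq_prod_range, eval_prod]
  congr 1
  refine prod_congr rfl fun i _ => ?_
  rw [Nat.cast_sub (by omega), eval_add, eval_X, eval_C]
  push_cast
  ring

theorem stmt_16 (d : ℕ) (hd : 2 ≤ d) (p : Polynomial ℚ)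
    (hp : ∀ n : ℕ, p.eval (n : ℚ) =
      ∑ k ∈ Finset.range d, ((d - 1).choose k * (d + n - k).choose d : ℚ)) :
    p.coeff (d - 2) = 2 ^ (d - 2) * (d + 4) / (6 * ((d - 2).factorial : ℚ)) := by
  obtain ⟨m, rfl⟩ : ∃ m, d = m + 2 := ⟨d - 2, by omega⟩
  rw [show m + 2 - 1 = m + 1 from rfl] at hp
  rw [show m + 2 - 2 = m from rfl]
  set Q : ℕ → ℚ[X] := fun k => ∏ i ∈ range (m + 2), (X + C ((m : ℚ) + 2 - k - i))
  have hpQ : p = C ((m + 2).factorial : ℚ)⁻¹ *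
      ∑ k ∈ range (m + 2), C ((m + 1).choose k : ℚ) * Q k := by
    refine eq_of_eval_natCast_eq fun n => ?_
    simp only [hp, eval_mul, eval_C, eval_finsetSum, mul_sum]
    refine sum_congr rfl fun k hk => ?_
    rw [cast_choose_add_sub_eq_eval_prod (mem_range.1 hk).le]
    push_cast
    ring
  have hQ : ∀ k : ℕ, (Q k).coeff m = ((m : ℚ) + 2) * (m + 1) / 24 *
      ((12 * (m + 2) + (3 * m + 5) * m) + -12 * (m + 3) * k + 12 * k ^ 2) := by
    intro k
    have h := prod_range_X_add_C_sub_coeff (d := m + 2) le_add_self ((m : ℚ) + 2 - k)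
    push_cast at h
    linear_combination h / 24
  have hsum := four_mul_sum_range_choose_mul_quadratic (m + 1)
    (12 * ((m : ℚ) + 2) + (3 * m + 5) * m) (-12 * (m + 3)) 12
  rw [hpQ, coeff_C_mul, finsetSum_coeff]
  simp_rw [coeff_C_mul, hQ, mul_left_comm _ (((m : ℚ) + 2) * (m + 1) / 24), ← mul_sum]
  generalize (∑ k ∈ range (m + 1 + 1), _ : ℚ) = S at hsum ⊢
  push_cast at hsum
  obtain rfl : S = 2 ^ m * (4 * m + 24) := by linear_combination hsum / 4
  rw [Nat.factorial_succ, Nat.factorial_succ]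
  push_cast
  field_simp
  ring
end
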